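/- Let W be a finite group acting linearly on a finite-dimensional complex vector space V equipped with a W-invariant inner product, let ν ∈ V, and let W₀ be the stabilizer of ν in W. Then the set S = { P'(ν) : P a W-invariant polynomial on V } (where P'(ν) is the gradient of P at ν, identified with an element of V via the inner product) equals the subspace V^{W₀} of W₀-fixed vectors. -/
import Mathlib

open MvPolynomial

private lemma my_eval_bind₁ {σ : Type*} (f : σ → MvPolynomial σ ℂ) (v : σ → ℂ)
    (p : MvPolynomial σ ℂ) :
    eval v (bind₁ f p) = eval (fun i => eval v (f i)) p := by
  induction p using MvPolynomial.induction_on with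
  | C a => simp
  | add p q hp hq => simp [hp, hq]
  | mul_X p j hp => simp [hp]

private lemma my_pderiv_bind₁ {n : ℕ} (f : Fin n → MvPolynomial (Fin n) ℂ) (i : Fin n)
    (p : MvPolynomial (Fin n) ℂ) :
    pderiv i (bind₁ f p) = ∑ j, bind₁ f (pderiv j p) * pderiv i (f j) := by
  induction p using MvPolynomial.induction_on with
  | C a => simp
  | add p q hp hq => simp only [map_add, hp, hq, add_mul, Finset.sum_add_distrib]
  | mul_X p j hp =>
    rw [map_mul, bind₁_X_right, pderiv_mul, hp]
    have hx : ∀ k : Fin n, pderiv k (p * X j) = pderiv k p * X j + p * pderiv k (X j) :=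
      fun k => pderiv_mul
    simp_rw [hx, map_add, map_mul, bind₁_X_right, add_mul, Finset.sum_add_distrib]
    congr 1
    · rw [Finset.sum_mul]
      exact Finset.sum_congr rfl fun k _ => by ring
    · rw [Finset.sum_eq_single j]
      · simp
      · intro k _ hk
        rw [pderiv_X_of_ne hk.symm]
        simp
      · simp

/-- Let `W` be a finite group acting linearly on `V = Fin n → ℂ` through a
representation `ρ` preserving the standard bilinear pairing `B(u,v) = ∑ i, uᵢ vᵢ` (so the
action is "orthogonal" w.r.t. the invariant form used to identify differentials with
gradients).  Let `ν ∈ V` and let `W₀` be the stabilizer of `ν` in `W`.  Then the set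
`S = { P'(ν) : P a W-invariant polynomial }`, where `P'(ν) = (∂₁P(ν), …, ∂ₙP(ν))` is the
gradient of `P` at `ν`, equals the subspace `V^{W₀}` of `W₀`-fixed vectors. -/
theorem gradients_of_invariants_eq_fixed_space {n : ℕ} {W : Type*} [Group W] [Fintype W]
    (ρ : W →* ((Fin n → ℂ) ≃ₗ[ℂ] (Fin n → ℂ)))
    (hB : ∀ (w : W) (u v : Fin n → ℂ),
      ∑ i, (ρ w u) i * (ρ w v) i = ∑ i, u i * v i)
    (ν : Fin n → ℂ) :
    {s : Fin n → ℂ | ∃ P : MvPolynomial (Fin n) ℂ,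
        (∀ (w : W) (v : Fin n → ℂ), eval (ρ w v) P = eval v P) ∧
        s = fun i => eval ν (pderiv i P)} =
      {v : Fin n → ℂ | ∀ w : W, ρ w ν = ν → ρ w v = v} := by
  classical
  -- matrices of the representation
  set A : W → Matrix (Fin n) (Fin n) ℂ :=
    fun w => Matrix.of fun i j => ρ w (fun k => if j = k then 1 else 0) i with hA
  have happ : ∀ (w : W) (x : Fin n → ℂ) (i : Fin n), ρ w x i = ∑ j, A w i j * x j := by
    intro w x i
    have h1 : ρ w x = ∑ j, x j • ρ w (fun k => if j = k then 1 else 0) := by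
      simpa using LinearMap.pi_apply_eq_sum_univ ((ρ w : (Fin n → ℂ) →ₗ[ℂ] (Fin n → ℂ))) x
    rw [h1]
    simp only [Finset.sum_apply, Pi.smul_apply, smul_eq_mul, hA]
    exact Finset.sum_congr rfl fun j _ => mul_comm _ _
  have hmv : ∀ (w : W) (x : Fin n → ℂ), ρ w x = (A w).mulVec x := by
    intro w x; funext i; rw [happ]; rfl
  have hcancel : ∀ (w : W) (x : Fin n → ℂ), ρ w⁻¹ (ρ w x) = x := by
    intro w x
    have : (ρ w⁻¹ * ρ w) x = x := by rw [← map_mul, inv_mul_cancel, map_one]; rfl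
    exact this
  have horth : ∀ w : W, (A w).transpose * A w = 1 := by
    intro w
    ext j k
    have h0 := hB w (fun m => if j = m then 1 else 0) (fun m => if k = m then 1 else 0)
    have h1 : ∑ i, (A w).transpose j i * A w i k
        = ∑ i, (if j = i then (1:ℂ) else 0) * (if k = i then 1 else 0) := h0
    rw [Matrix.mul_apply, Matrix.one_apply, h1, Finset.sum_eq_single j]
    · simp [eq_comm]
    · intro b _ hb
      simp [Ne.symm hb]
    · simp
  have hinv : ∀ w : W, A w⁻¹ * A w = 1 := by
    intro w
    ext i j
    have h0 : (A w⁻¹).mulVec ((A w).mulVec (Pi.single j 1)) = Pi.single j 1 := by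
      rw [← hmv, ← hmv, hcancel]
    rw [Matrix.mulVec_mulVec, Matrix.mulVec_single_one] at h0
    have h1 := congrFun h0 i
    rw [Matrix.one_apply]
    simpa [Pi.single_apply] using h1
  have htrans : ∀ w : W, (A w).transpose = A w⁻¹ := by
    intro w
    have h2 : A w * A w⁻¹ = 1 := mul_eq_one_comm.mp (hinv w)
    calc (A w).transpose = (A w).transpose * (A w * A w⁻¹) := by rw [h2, Matrix.mul_one]
      _ = ((A w).transpose * A w) * A w⁻¹ := by rw [Matrix.mul_assoc]
      _ = A w⁻¹ := by rw [horth, Matrix.one_mul]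
  -- substitution polynomials
  set sub : W → Fin n → MvPolynomial (Fin n) ℂ :=
    fun w l => ∑ j, C (A w l j) * X j with hsub
  have heval : ∀ (w : W) (x : Fin n → ℂ) (Q : MvPolynomial (Fin n) ℂ),
      eval x (bind₁ (sub w) Q) = eval (ρ w x) Q := by
    intro w x Q
    rw [my_eval_bind₁]
    have h4 : (fun i => eval x (sub w i)) = ρ w x := by
      funext l
      rw [happ, hsub]
      simp
    rw [h4]
  have hf : ∀ (w : W) (j i : Fin n), pderiv i (sub w j) = C (A w j i) := by
    intro w j i
    rw [hsub]
    simp only [map_sum]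
    rw [Finset.sum_eq_single i]
    · simp
    · intro k _ hk
      rw [pderiv_C_mul, pderiv_X_of_ne hk, mul_zero]
    · simp
  have hgrad : ∀ (Q : MvPolynomial (Fin n) ℂ) (w : W) (i : Fin n),
      eval ν (pderiv i (bind₁ (sub w) Q))
        = ∑ j, eval (ρ w ν) (pderiv j Q) * A w j i := by
    intro Q w i
    rw [my_pderiv_bind₁, map_sum]
    refine Finset.sum_congr rfl fun j _ => ?_
    rw [map_mul, hf, eval_C, heval]
  ext s
  simp only [Set.mem_setOf_eq]
  constructor
  · rintro ⟨P, hPinv, rfl⟩ w hw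
    set g : Fin n → ℂ := fun i => eval ν (pderiv i P) with hg
    have hpoly : bind₁ (sub w) P = P :=
      MvPolynomial.funext fun x => by rw [heval]; exact hPinv w x
    have hgi : ∀ i, g i = ∑ j, g j * A w j i := by
      intro i
      have h3 := hgrad P w i
      rw [hpoly, hw] at h3
      simpa [hg] using h3
    have hfix : ρ w⁻¹ g = g := by
      rw [hmv, ← htrans]
      funext i
      simp only [Matrix.mulVec, dotProduct, Matrix.transpose_apply]
      rw [hgi i]
      exact Finset.sum_congr rfl fun j _ => mul_comm _ _
    have hc : ρ w (ρ w⁻¹ g) = g := by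
      have := hcancel w⁻¹ g
      rwa [inv_inv] at this
    rw [hfix] at hc
    exact hc
  · intro hv
    -- construct the invariant polynomial
    set O : Finset (Fin n → ℂ) := (Finset.univ.image fun w : W => ρ w ν).erase ν with hO
    have hexists : ∀ y : Fin n → ℂ, y ≠ ν → ∃ i, y i ≠ ν i := by
      intro y hy
      by_contra hcon
      push_neg at hcon
      exact hy (funext hcon)
    have hmemne : ∀ y : {x // x ∈ O}, (y : Fin n → ℂ) ≠ ν := fun y => Finset.ne_of_mem_erase y.2
    set k : {x // x ∈ O} → Fin n := fun y => (hexists y.1 (hmemne y)).choose with hkdef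
    have hkspec : ∀ y : {x // x ∈ O}, y.1 (k y) ≠ ν (k y) :=
      fun y => (hexists y.1 (hmemne y)).choose_spec
    set h : MvPolynomial (Fin n) ℂ :=
      ∏ y ∈ O.attach, (C ((ν (k y) - y.1 (k y))⁻¹) * (X (k y) - C (y.1 (k y)))) with hh
    have hhν : eval ν h = 1 := by
      rw [hh, map_prod]
      refine Finset.prod_eq_one fun y _ => ?_
      simp only [map_mul, map_sub, eval_C, eval_X]
      exact inv_mul_cancel₀ (sub_ne_zero.mpr (Ne.symm (hkspec y)))
    have hh0 : ∀ z ∈ O, eval z h = 0 := by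
      intro z hz
      rw [hh, map_prod]
      refine Finset.prod_eq_zero (Finset.mem_attach O ⟨z, hz⟩) ?_
      simp
    have hz0 : ∀ w : W, ρ w ν ≠ ν → eval (ρ w ν) h = 0 := fun w hw =>
      hh0 _ (Finset.mem_erase.mpr ⟨hw, Finset.mem_image_of_mem _ (Finset.mem_univ w)⟩)
    set L : MvPolynomial (Fin n) ℂ := ∑ j, C (s j) * (X j - C (ν j)) with hL
    have hLν : eval ν L = 0 := by rw [hL]; simp
    have hdL : ∀ j, eval ν (pderiv j L) = s j := by
      intro j
      rw [hL, map_sum, map_sum, Finset.sum_eq_single j]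
      · rw [pderiv_C_mul, map_sub, pderiv_C, sub_zero, pderiv_X_self]
        simp
      · intro b _ hb
        rw [pderiv_C_mul, map_sub, pderiv_C, sub_zero, pderiv_X_of_ne hb]
        simp
      · simp
    set W0 : Finset W := Finset.univ.filter (fun w => ρ w ν = ν) with hW0
    have hW0card : ((W0.card : ℂ)) ≠ 0 := by
      have h1 : (1:W) ∈ W0 := by simp [hW0]
      have hpos : 0 < W0.card := Finset.card_pos.mpr ⟨1, h1⟩
      exact Nat.cast_ne_zero.mpr hpos.ne'
    set c : ℂ := ((W0.card : ℂ))⁻¹ with hc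
    set g : MvPolynomial (Fin n) ℂ := C c * (L * (h * h)) with hgdef
    have hdgν : ∀ j, eval ν (pderiv j g) = c * s j := by
      intro j
      rw [hgdef, pderiv_C_mul, pderiv_mul, pderiv_mul]
      simp only [map_mul, map_add, eval_C]
      rw [hhν, hLν, hdL]
      ring
    have hdgz : ∀ (z : Fin n → ℂ), eval z h = 0 → ∀ j, eval z (pderiv j g) = 0 := by
      intro z hz j
      rw [hgdef, pderiv_C_mul, pderiv_mul, pderiv_mul]
      simp only [map_mul, map_add, eval_C]
      rw [hz]
      ring
    refine ⟨∑ w : W, bind₁ (sub w) g, ?_, ?_⟩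
    · intro u x
      rw [map_sum, map_sum]
      simp only [heval]
      have hcomp : ∀ w : W, ρ w (ρ u x) = ρ (w * u) x := by
        intro w
        rw [map_mul]
        rfl
      simp only [hcomp]
      exact Fintype.sum_equiv (Equiv.mulRight u)
        (fun w => eval (ρ (w * u) x) g) (fun w => eval (ρ w x) g) (fun w => rfl)
    · funext i
      simp only [map_sum, hgrad]
      have hsplit : ∀ w : W, (∑ j, eval (ρ w ν) (pderiv j g) * A w j i)
          = if ρ w ν = ν then c * s i else 0 := by
        intro w
        by_cases hw : ρ w ν = ν
        · rw [if_pos hw, hw]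
          simp only [hdgν]
          have hwinv : ρ w⁻¹ ν = ν := by
            have := hcancel w ν
            rwa [hw] at this
          have hsfix : ρ w⁻¹ s = s := hv w⁻¹ hwinv
          have h7 : (A w⁻¹).mulVec s = s := by rw [← hmv]; exact hsfix
          have h8 := congrFun h7 i
          rw [← htrans] at h8
          simp only [Matrix.mulVec, dotProduct, Matrix.transpose_apply] at h8
          calc ∑ j, c * s j * A w j i = c * ∑ j, A w j i * s j := by
                rw [Finset.mul_sum]
                exact Finset.sum_congr rfl fun j _ => by ring
            _ = c * s i := by rw [h8]
        · rw [if_neg hw]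
          refine Finset.sum_eq_zero fun j _ => ?_
          rw [hdgz _ (hz0 w hw) j, zero_mul]
      simp only [hsplit]
      rw [Finset.sum_ite, Finset.sum_const_zero, add_zero, Finset.sum_const, nsmul_eq_mul,
        ← hW0, hc, ← mul_assoc, mul_inv_cancel₀ hW0card, one_mul]
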